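/- arXiv:1511.00209 — 2 statements merged into one kernel-verified Lean document; each statement's English description precedes it below -/
import Mathlib

section
/- Let A and B be finite alphabets, let x ∈ A^ℤ and y ∈ B^ℤ be eventually periodic sequences, each with least period N, and let X and Y be the subshifts they generate. If a(x) ≡ a(y) (mod N), then X and Y are conjugate. -/
open Classical

/-- The shift map `σ` on bi-infinite sequences: `σ(x)_i = x_{i+1}`. -/
def shiftMap {A : Type*} (x : ℤ → A) : ℤ → A := fun i => x (i + 1)

/-- The iterated shift `σ^k` for `k ∈ ℤ`: `σ^k(x)_i = x_{i+k}`. -/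
def shiftZ {A : Type*} (k : ℤ) (x : ℤ → A) : ℤ → A := fun i => x (i + k)

/-- `x` is periodic with period `N > 0`, i.e. `σ^N(x) = x`. -/
def IsPeriodicWith {A : Type*} (x : ℤ → A) (N : ℕ) : Prop :=
  0 < N ∧ ∀ i : ℤ, x (i + N) = x i

/-- `x` is periodic (with some period `N > 0`). -/
def IsPeriodicSeq {A : Type*} (x : ℤ → A) : Prop := ∃ N : ℕ, IsPeriodicWith x N

/-- The sequence `p(x;i,n)` obtained from `x` by removing the block `x_{i+1} ⋯ x_{i+n}`. -/
def removeBlock {A : Type*} (x : ℤ → A) (i : ℤ) (n : ℕ) : ℤ → A :=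
  fun k => if k ≤ i then x k else x (k + n)

/-- `(i,n)` is an anomaly occurrence of `x`: `n > 0` and `p(x;i,n)` is periodic. -/
def IsAnomalyOcc {A : Type*} (x : ℤ → A) (i : ℤ) (n : ℕ) : Prop :=
  0 < n ∧ IsPeriodicSeq (removeBlock x i n)

/-- `x` is eventually periodic: non-periodic, but removing some block leaves a periodic sequence. -/
def EventuallyPeriodic {A : Type*} (x : ℤ → A) : Prop :=
  ¬ IsPeriodicSeq x ∧ ∃ (i : ℤ) (n : ℕ), IsAnomalyOcc x i n

/-- The least period of an eventually periodic sequence `x`: the least period of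
`p(x;i,n)` over anomaly occurrences `(i,n)` of `x`. -/
noncomputable def evLeastPeriod {A : Type*} (x : ℤ → A) : ℕ :=
  sInf {N : ℕ | ∃ (i : ℤ) (n : ℕ), IsAnomalyOcc x i n ∧ IsPeriodicWith (removeBlock x i n) N}

/-- The anomaly size `a(x)`: the minimum of `n` over anomaly occurrences `(i,n)` of `x`. -/
noncomputable def anomalySize {A : Type*} (x : ℤ → A) : ℕ :=
  sInf {n : ℕ | ∃ i : ℤ, IsAnomalyOcc x i n}

/-- The orbit `{σ^k(x) : k ∈ ℤ}` of a bi-infinite sequence. -/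
def seqOrbit {A : Type*} (x : ℤ → A) : Set (ℤ → A) := {y | ∃ k : ℤ, y = shiftZ k x}

/-- The subshift generated by `x`: the closure of its orbit in the product topology. -/
def subshiftGen {A : Type*} [TopologicalSpace A] (x : ℤ → A) : Set (ℤ → A) :=
  closure (seqOrbit x)

/-- Two subshifts are conjugate if there is a homeomorphism between them commuting
with the shift. -/
def Conjugate {A B : Type*} [TopologicalSpace A] [TopologicalSpace B]
    (X : Set (ℤ → A)) (Y : Set (ℤ → B)) : Prop :=
  ∃ φ : X ≃ₜ Y, ∀ (u : ℤ → A) (hu : u ∈ X) (hu' : shiftMap u ∈ X),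
    ((φ ⟨shiftMap u, hu'⟩ : Y) : ℤ → B) = shiftMap ((φ ⟨u, hu⟩ : Y) : ℤ → B)

/-- The relation generating the suspension: `(x,s) ∼ (σ^n(x), s - n)`. -/
def SuspRel {A : Type*} (X : Set (ℤ → A)) : (X × ℝ) → (X × ℝ) → Prop :=
  fun p q => ∃ n : ℤ, (q.1 : ℤ → A) = shiftZ n (p.1 : ℤ → A) ∧ q.2 = p.2 - n

/-- The suspension `ΣX` of a subshift `X`. -/
def Susp {A : Type*} [TopologicalSpace A] (X : Set (ℤ → A)) : Type _ :=
  Quot (SuspRel X)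

instance {A : Type*} [TopologicalSpace A] (X : Set (ℤ → A)) : TopologicalSpace (Susp X) :=
  instTopologicalSpaceQuot

/-- The suspension flow `φ_t [x,s] = [x, s+t]`. -/
def suspFlow {A : Type*} [TopologicalSpace A] (X : Set (ℤ → A)) (t : ℝ) :
    Susp X → Susp X :=
  Quot.lift (fun p => Quot.mk _ (p.1, p.2 + t)) (by
    rintro p r ⟨n, h1, h2⟩
    exact Quot.sound ⟨n, h1, by rw [h2]; ring⟩)

/-- Two subshifts are flow equivalent if there is a homeomorphism of their suspensions
taking flow lines to flow lines in an orientation-preserving way. -/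
def FlowEquiv {A B : Type*} [TopologicalSpace A] [TopologicalSpace B]
    (X : Set (ℤ → A)) (Y : Set (ℤ → B)) : Prop :=
  ∃ h : Susp X ≃ₜ Susp Y, ∀ u : Susp X, ∃ τ : ℝ → ℝ,
    StrictMono τ ∧ Function.Bijective τ ∧ τ 0 = 0 ∧
      ∀ t : ℝ, h (suspFlow X t u) = suspFlow Y (τ t) (h u)

/-- Cell lengths `z_n` for the type-`S` skew Sturmian sequence `S(0, q/p)`, with `β = p/q`. -/
noncomputable def cellLenS (p q : ℤ) (n : ℤ) : ℕ :=
  if n < 0 then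
    ({k : ℤ | (n : ℚ) < (k : ℚ) * ((p : ℚ) / (q : ℚ)) ∧
        (k : ℚ) * ((p : ℚ) / (q : ℚ)) ≤ (n : ℚ) + 1}).ncard
  else if n = 0 then
    ({k : ℤ | 0 < (k : ℚ) * ((p : ℚ) / (q : ℚ)) ∧
        (k : ℚ) * ((p : ℚ) / (q : ℚ)) < 1}).ncard
  else
    ({k : ℤ | (n : ℚ) ≤ (k : ℚ) * ((p : ℚ) / (q : ℚ)) ∧
        (k : ℚ) * ((p : ℚ) / (q : ℚ)) < (n : ℚ) + 1}).ncard

/-- Cell lengths `z′_n` for the type-`S′` skew Sturmian sequence `S′(0, q/p)`, with `β = p/q`. -/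
noncomputable def cellLenS' (p q : ℤ) (n : ℤ) : ℕ :=
  if n < 0 then
    ({k : ℤ | (n : ℚ) ≤ (k : ℚ) * ((p : ℚ) / (q : ℚ)) ∧
        (k : ℚ) * ((p : ℚ) / (q : ℚ)) < (n : ℚ) + 1}).ncard
  else if n = 0 then
    ({k : ℤ | 0 ≤ (k : ℚ) * ((p : ℚ) / (q : ℚ)) ∧
        (k : ℚ) * ((p : ℚ) / (q : ℚ)) ≤ 1}).ncard
  else
    ({k : ℤ | (n : ℚ) < (k : ℚ) * ((p : ℚ) / (q : ℚ)) ∧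
        (k : ℚ) * ((p : ℚ) / (q : ℚ)) ≤ (n : ℚ) + 1}).ncard

/-- The position `L_n` of the leading `1` of the cell `B_n`. -/
noncomputable def cellStart (z : ℤ → ℕ) (n : ℤ) : ℤ :=
  if 0 ≤ n then n + ∑ j ∈ Finset.Ico (0 : ℤ) n, (z j : ℤ)
  else n - ∑ j ∈ Finset.Ico n (0 : ℤ), (z j : ℤ)

/-- The `{0,1}`-sequence determined by cell lengths `z`: a `1` at each position `L_n`
and `0` elsewhere. -/
noncomputable def seqOfCells (z : ℤ → ℕ) : ℤ → Fin 2 :=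
  fun i => if ∃ n : ℤ, i = cellStart z n then 1 else 0

/-- The type-`S` skew Sturmian sequence `S(0, q/p)`. -/
noncomputable def sturmS (p q : ℤ) : ℤ → Fin 2 := seqOfCells (cellLenS p q)

/-- The type-`S′` skew Sturmian sequence `S′(0, q/p)`. -/
noncomputable def sturmS' (p q : ℤ) : ℤ → Fin 2 := seqOfCells (cellLenS' p q)


/-!
Let `p = p(x;i,n)` and `q = p(y;i',n')` have least period `N`. Any two anomaly lengths of `x` are
congruent mod `N`, so `a(x) ≡ a(y)` gives `n ≡ n' (mod N)`. Then the pair sequence `z = (x, y)`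
coincides with the periodic pair `r = (p, q)` on a left half-line and with `σ^{-n} r` on a right
half-line, so, like `X` and `Y`, its subshift `Z` is the orbit of `z` together with the finite orbit
of `r`. The coordinate projections `Z → X` and `Z → Y` are continuous, commute with the shift and
are injective, because `x`, `y` are not periodic while `p`, `q` share the least period `N`. By
compactness they are homeomorphisms, and `X ≅ Z ≅ Y`.
-/

open Function Filter Set Topology

section Periodic

variable {A : Type*} {u v : ℤ → A} {c : ℤ}

lemma Function.Periodic.eq_of_forall_exists_int_mul (hu : Periodic u c) (hv : Periodic v c)
    (h : ∀ k, ∃ s : ℤ, u (k + s * c) = v (k + s * c)) : u = v := by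
  funext k
  obtain ⟨s, hs⟩ := h k
  rwa [← smul_eq_mul, hu.zsmul s k, hv.zsmul s k] at hs

lemma Function.Periodic.eq_of_eqOn_Ico (hc : 0 < c) (hu : Periodic u c) (hv : Periodic v c)
    (h : EqOn u v (Ico 0 c)) : u = v := by
  refine hu.eq_of_forall_exists_int_mul hv fun k => ⟨-(k / c), h ?_⟩
  have hmod : k + -(k / c) * c = k % c := by rw [Int.emod_def]; ring
  rw [hmod]
  exact ⟨Int.emod_nonneg k hc.ne', Int.emod_lt_of_pos k hc⟩

lemma Function.Periodic.eq_of_eventuallyEq_atBot (hc : 0 < c) (hu : Periodic u c)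
    (hv : Periodic v c) (h : u =ᶠ[atBot] v) : u = v := by
  obtain ⟨a, ha⟩ := eventually_atBot.mp h
  refine hu.eq_of_forall_exists_int_mul hv fun k => ⟨-|k - a|, ha _ ?_⟩
  nlinarith [le_abs_self (k - a), abs_nonneg (k - a)]

lemma Function.Periodic.eq_of_eventuallyEq_atTop (hc : 0 < c) (hu : Periodic u c)
    (hv : Periodic v c) (h : u =ᶠ[atTop] v) : u = v := by
  obtain ⟨a, ha⟩ := eventually_atTop.mp h
  refine hu.eq_of_forall_exists_int_mul hv fun k => ⟨|a - k|, ha _ ?_⟩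
  nlinarith [le_abs_self (a - k), abs_nonneg (a - k)]

lemma Function.Periodic.of_dvd (hu : Periodic u c) {d : ℤ} (hd : c ∣ d) : Periodic u d := by
  obtain ⟨s, rfl⟩ := hd
  rw [mul_comm, ← smul_eq_mul]
  exact hu.zsmul s

lemma IsPeriodicWith.periodic {N : ℕ} (h : IsPeriodicWith u N) : Periodic u N := h.2

lemma isPeriodicWith_natAbs_of_periodic {d : ℤ} (hd : Periodic u d) (hd0 : d ≠ 0) :
    IsPeriodicWith u d.natAbs := by
  refine ⟨Int.natAbs_pos.mpr hd0, ?_⟩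
  rw [Int.natCast_natAbs]
  rcases abs_choice d with h | h <;> rw [h]
  exacts [hd, hd.neg]

def IsLeastPeriod (u : ℤ → A) (N : ℕ) : Prop :=
  IsPeriodicWith u N ∧ ∀ M, IsPeriodicWith u M → N ≤ M

lemma IsLeastPeriod.dvd_of_periodic {N : ℕ} (h : IsLeastPeriod u N) {d : ℤ}
    (hd : Periodic u d) : (N : ℤ) ∣ d := by
  have hN : (0 : ℤ) < N := by exact_mod_cast h.1.1
  have hmod : Periodic u (d % N) := by
    rw [Int.emod_def]
    exact hd.sub_period (h.1.periodic.of_dvd (dvd_mul_right _ _))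
  by_contra hnd
  have hpos : 0 < d % N :=
    lt_of_le_of_ne (Int.emod_nonneg d hN.ne') (Ne.symm (mt Int.dvd_of_emod_eq_zero hnd))
  have := h.2 _ (isPeriodicWith_natAbs_of_periodic hmod hpos.ne')
  have := Int.emod_lt_of_pos d hN
  omega

end Periodic

section Shift

variable {A : Type*} {u x r : ℤ → A}

lemma shiftZ_shiftZ (a b : ℤ) (u : ℤ → A) : shiftZ a (shiftZ b u) = shiftZ (a + b) u := by
  funext k
  simp only [shiftZ, add_assoc]

lemma shiftZ_zero (u : ℤ → A) : shiftZ 0 u = u := funext fun k => congrArg u (add_zero k)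

lemma IsPeriodicWith.shiftZ {N : ℕ} (h : IsPeriodicWith u N) (a : ℤ) :
    IsPeriodicWith (shiftZ a u) N :=
  ⟨h.1, fun k => by simp only [_root_.shiftZ, add_right_comm k, h.2 (k + a)]⟩

lemma periodic_of_shiftZ_eq {a b : ℤ} (h : shiftZ a u = shiftZ b u) : Periodic u (a - b) :=
  fun k => by simpa [shiftZ, sub_add_eq_add_sub, add_sub_assoc] using congrFun h (k - b)

lemma Function.Periodic.shiftZ_eq_shiftZ {c a b : ℤ} (hu : Periodic u c) (hab : c ∣ a - b) :
    shiftZ a u = shiftZ b u := by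
  funext k
  simpa [shiftZ, add_sub_cancel, add_assoc] using hu.of_dvd hab (k + b)

lemma shiftZ_injective_of_not_periodic (hx : ¬IsPeriodicSeq x) :
    Injective (fun a : ℤ => shiftZ a x) := by
  intro a b h
  by_contra hab
  exact hx ⟨_, isPeriodicWith_natAbs_of_periodic (periodic_of_shiftZ_eq h) (sub_ne_zero.mpr hab)⟩

lemma shiftZ_ne_shiftZ_of_not_periodic (hx : ¬IsPeriodicSeq x) {N : ℕ}
    (hr : IsPeriodicWith r N) (a b : ℤ) : shiftZ a x ≠ shiftZ b r := by
  intro h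
  have hxr : x = shiftZ (-a + b) r := by
    rw [← shiftZ_shiftZ, ← h, shiftZ_shiftZ, neg_add_cancel, shiftZ_zero]
  exact hx ⟨N, hxr ▸ hr.shiftZ _⟩

end Shift

section Anomaly

variable {A : Type*} {x : ℤ → A} {i k : ℤ} {n N : ℕ}

lemma removeBlock_of_le (h : k ≤ i) : removeBlock x i n k = x k := if_pos h

lemma removeBlock_of_lt (h : i < k) : removeBlock x i n k = x (k + n) := if_neg (not_le.mpr h)

lemma removeBlock_sub_of_lt (h : i + n < k) : removeBlock x i n (k - n) = x k := by
  rw [removeBlock_of_lt (by omega), sub_add_cancel]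

/-- Both `p(x;i,n)` and `p(x;i₂,n₂)` coincide with `x` on a left half-line, hence with each other;
comparing them on a right half-line shows that `n₂ - n` is a period. -/
lemma IsLeastPeriod.modEq_of_isAnomalyOcc (hp : IsLeastPeriod (removeBlock x i n) N) {i₂ : ℤ}
    {n₂ : ℕ} (h₂ : IsAnomalyOcc x i₂ n₂) : n ≡ n₂ [MOD N] := by
  obtain ⟨M, hM⟩ := h₂.2
  have hNM : (0 : ℤ) < N * M := by exact_mod_cast Nat.mul_pos hp.1.1 hM.1
  have hp₂ : removeBlock x i n = removeBlock x i₂ n₂ := by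
    refine (hp.1.periodic.of_dvd (dvd_mul_right _ _)).eq_of_eventuallyEq_atBot hNM
      (hM.periodic.of_dvd (dvd_mul_left _ _)) (eventually_atBot.mpr ⟨min i i₂, fun k hk => ?_⟩)
    rw [removeBlock_of_le (hk.trans (min_le_left _ _)),
      removeBlock_of_le (hk.trans (min_le_right _ _))]
  have hshift : shiftZ ((n₂ : ℤ) - n) (removeBlock x i n) = removeBlock x i n := by
    refine (hp.1.shiftZ _).periodic.eq_of_eventuallyEq_atTop (by exact_mod_cast hp.1.1)
      hp.1.periodic (eventually_atTop.mpr ⟨max (i + n) i₂ + 1, fun k hk => ?_⟩)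
    have hk₁ : i + n < k + n₂ := by omega
    have hk₂ : i₂ < k := by omega
    show removeBlock x i n (k + (n₂ - n)) = _
    rw [← add_sub_assoc, removeBlock_sub_of_lt hk₁, hp₂, removeBlock_of_lt hk₂]
  exact Nat.modEq_iff_dvd.mpr (hp.dvd_of_periodic (congrFun hshift))

lemma exists_isLeastPeriod_removeBlock (hx : EventuallyPeriodic x) (hN : evLeastPeriod x = N) :
    ∃ i n, IsLeastPeriod (removeBlock x i n) N ∧ n ≡ anomalySize x [MOD N] := by
  obtain ⟨-, i₀, n₀, h₀⟩ := hx
  obtain ⟨M, hM⟩ := h₀.2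
  obtain ⟨i, n, hocc, hper⟩ : N ∈ {N : ℕ | ∃ i n, IsAnomalyOcc x i n ∧
      IsPeriodicWith (removeBlock x i n) N} := hN ▸ Nat.sInf_mem ⟨M, i₀, n₀, h₀, hM⟩
  have hleast : IsLeastPeriod (removeBlock x i n) N :=
    ⟨hper, fun M' hM' => by rw [← hN]; exact Nat.sInf_le ⟨i, n, hocc, hM'⟩⟩
  obtain ⟨ia, hia⟩ : ∃ i, IsAnomalyOcc x i (anomalySize x) :=
    Nat.sInf_mem (s := {n | ∃ i, IsAnomalyOcc x i n}) ⟨n₀, i₀, h₀⟩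
  exact ⟨i, n, hleast, hleast.modEq_of_isAnomalyOcc hia⟩

end Anomaly

section Orbit

variable {C : Type*} {x r u : ℤ → C} {N : ℕ} {a b c : ℤ}

lemma exists_eqOn_shiftZ_of_lt_abs (hleft : ∀ k ≤ a, x k = r k)
    (hright : ∀ k ≥ b, x k = r (k + c)) {L : ℕ} {m : ℤ} (hm : L + |a| + |b| < |m|) :
    ∃ j, ∀ k : ℤ, |k| ≤ L → x (k + m) = r (k + j) := by
  obtain ⟨ha₁, ha₂⟩ := abs_le.mp (le_refl |a|)
  obtain ⟨hb₁, hb₂⟩ := abs_le.mp (le_refl |b|)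
  rcases abs_cases m with ⟨hm', -⟩ | ⟨hm', -⟩
  · refine ⟨m + c, fun k hk => ?_⟩
    rw [hright _ (by rw [abs_le] at hk; omega), add_assoc]
  · exact ⟨m, fun k hk => hleft _ (by rw [abs_le] at hk; omega)⟩

lemma mem_seqOrbit_of_forall_window (hr : IsPeriodicWith r N)
    (h : ∀ L : ℕ, ∃ j, ∀ k : ℤ, |k| ≤ L → u k = r (k + j)) : u ∈ seqOrbit r := by
  have hN : (0 : ℤ) < N := by exact_mod_cast hr.1
  have hu : Periodic u N := fun k => by
    obtain ⟨j, hj⟩ := h (k.natAbs + N)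
    obtain ⟨hk₁, hk₂⟩ := abs_le.mp (le_refl |k|)
    rw [hj k (by rw [abs_le]; push_cast; omega), hj (k + N) (by rw [abs_le]; push_cast; omega),
      add_right_comm, hr.2]
  obtain ⟨j, hj⟩ := h N
  refine ⟨j, hu.eq_of_eqOn_Ico hN (hr.shiftZ j).periodic fun k hk => hj k ?_⟩
  rw [abs_le]
  exact ⟨by linarith [hk.1], hk.2.le⟩

variable [TopologicalSpace C] [DiscreteTopology C]

lemma eventually_forall_abs_le_eq (u : ℤ → C) (L : ℕ) :
    ∀ᶠ v in 𝓝 u, ∀ k : ℤ, |k| ≤ L → v k = u k := by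
  have hcoord : ∀ k, ∀ᶠ v in 𝓝 u, v k = u k := fun k =>
    tendsto_pure.mp (nhds_discrete C ▸ (continuous_apply k).tendsto u)
  filter_upwards [(Finset.Icc (-(L : ℤ)) L).eventually_all.mpr fun k _ => hcoord k]
    with v hv k hk
  exact hv k (Finset.mem_Icc.mpr (abs_le.mp hk))

/-- A limit of shifts `σ^{m_t} x` is `σ^m x` if some `m` recurs among the `m_t`; otherwise
`|m_t| → ∞`, and on every window `σ^{m_t} x` eventually agrees with a shift of `r`. -/
lemma subshiftGen_subset_seqOrbit_union (hr : IsPeriodicWith r N)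
    (hleft : ∀ k ≤ a, x k = r k) (hright : ∀ k ≥ b, x k = r (k + c)) :
    subshiftGen x ⊆ seqOrbit x ∪ seqOrbit r := by
  intro u hu
  obtain ⟨f, hf, hfu⟩ := mem_closure_iff_seq_limit.mp hu
  choose m hm using hf
  by_cases hbdd : ∃ m₀, ∃ᶠ t in atTop, m t = m₀
  · obtain ⟨m₀, hm₀⟩ := hbdd
    exact Or.inl ⟨m₀, tendsto_nhds_unique_of_frequently_eq hfu tendsto_const_nhds
      (hm₀.mono fun t ht => by rw [hm t, ht])⟩
  have hm_cofinite : Tendsto m atTop cofinite := by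
    simp only [not_exists, not_frequently] at hbdd
    exact le_cofinite_iff_compl_singleton_mem.mpr hbdd
  have habs : Tendsto (fun t => |m t|) atTop atTop :=
    (tendsto_abs_atBot_atTop.sup tendsto_abs_atTop_atTop).comp (Int.cofinite_eq ▸ hm_cofinite)
  refine Or.inr (mem_seqOrbit_of_forall_window hr fun L => ?_)
  obtain ⟨t, hwin, hfar⟩ := ((hfu.eventually (eventually_forall_abs_le_eq u L)).and
    (habs.eventually_gt_atTop (L + |a| + |b|))).exists
  obtain ⟨j, hj⟩ := exists_eqOn_shiftZ_of_lt_abs hleft hright hfar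
  refine ⟨j, fun k hk => ?_⟩
  rw [← hwin k hk, hm t]
  exact hj k hk

end Orbit

section Conjugacy

variable {A B C : Type*} [TopologicalSpace A] [TopologicalSpace B] [TopologicalSpace C]

lemma Continuous.comp_left_pi {ι : Type*} {f : C → A} (hf : Continuous f) :
    Continuous fun u : ι → C => f ∘ u :=
  continuous_pi fun k => hf.comp (continuous_apply k)

lemma shiftMap_mem_subshiftGen {x u : ℤ → C} (hu : u ∈ subshiftGen x) :
    shiftMap u ∈ subshiftGen x :=
  map_mem_closure (continuous_pi fun k => continuous_apply (k + 1)) hu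
    fun _ ⟨k, hk⟩ => ⟨1 + k, hk ▸ shiftZ_shiftZ 1 k x⟩

lemma image_comp_subshiftGen [CompactSpace C] [T2Space A] {f : C → A} (hf : Continuous f)
    (z : ℤ → C) : (f ∘ ·) '' subshiftGen z = subshiftGen (f ∘ z) := by
  rw [subshiftGen, image_closure_of_isCompact isClosed_closure.isCompact
    hf.comp_left_pi.continuousOn]
  congr 1
  ext v
  constructor
  · rintro ⟨_, ⟨k, rfl⟩, rfl⟩
    exact ⟨k, rfl⟩
  · rintro ⟨k, rfl⟩
    exact ⟨_, ⟨k, rfl⟩, rfl⟩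

lemma exists_homeomorph_comp [CompactSpace C] [T2Space A] {f : C → A} (hf : Continuous f)
    {z : ℤ → C} (hinj : InjOn (f ∘ ·) (subshiftGen z)) :
    ∃ φ : subshiftGen z ≃ₜ subshiftGen (f ∘ z), ∀ w, (φ w : ℤ → A) = f ∘ w := by
  have hbij : BijOn (f ∘ ·) (subshiftGen z) (subshiftGen (f ∘ z)) := by
    rw [← image_comp_subshiftGen hf]
    exact hinj.bijOn_image
  have : CompactSpace (subshiftGen z) :=
    isCompact_iff_compactSpace.mp isClosed_closure.isCompact
  have hcont : Continuous (hbij.equiv _) :=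
    (hf.comp_left_pi.comp continuous_subtype_val).subtype_mk _
  exact ⟨hcont.homeoOfEquivCompactToT2, fun _ => rfl⟩

theorem conjugate_of_injOn [CompactSpace C] [T2Space A] [T2Space B] {f : C → A} {g : C → B}
    (hf : Continuous f) (hg : Continuous g) {z : ℤ → C} (hfz : InjOn (f ∘ ·) (subshiftGen z))
    (hgz : InjOn (g ∘ ·) (subshiftGen z)) :
    Conjugate (subshiftGen (f ∘ z)) (subshiftGen (g ∘ z)) := by
  obtain ⟨φ, hφ⟩ := exists_homeomorph_comp hf hfz
  obtain ⟨ψ, hψ⟩ := exists_homeomorph_comp hg hgz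
  refine ⟨φ.symm.trans ψ, fun u hu hu' => ?_⟩
  set w := φ.symm ⟨u, hu⟩
  have hw : φ.symm ⟨shiftMap u, hu'⟩ = ⟨shiftMap w, shiftMap_mem_subshiftGen w.2⟩ := by
    rw [Homeomorph.symm_apply_eq]
    ext1
    rw [hφ]
    change shiftMap u = shiftMap (f ∘ (w : ℤ → C))
    rw [← hφ, Homeomorph.apply_symm_apply]
  simp only [Homeomorph.trans_apply, hw, hψ]
  rfl

end Conjugacy

lemma injOn_comp_seqOrbit_union {A C : Type*} (f : C → A) {z r : ℤ → C} {N : ℕ}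
    (hz : ¬IsPeriodicSeq (f ∘ z)) (hr : IsPeriodicWith r N) (hfr : IsLeastPeriod (f ∘ r) N) :
    InjOn (f ∘ ·) (seqOrbit z ∪ seqOrbit r) := by
  rintro _ (⟨a, rfl⟩ | ⟨a, rfl⟩) _ (⟨b, rfl⟩ | ⟨b, rfl⟩) h
  · rw [shiftZ_injective_of_not_periodic hz h]
  · exact absurd h (shiftZ_ne_shiftZ_of_not_periodic hz hfr.1 a b)
  · exact absurd h.symm (shiftZ_ne_shiftZ_of_not_periodic hz hfr.1 b a)
  · exact hr.periodic.shiftZ_eq_shiftZ (hfr.dvd_of_periodic (periodic_of_shiftZ_eq h))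

theorem conjugate_subshiftGen_of_isLeastPeriod {A B : Type*} [Finite A] [Finite B]
    [TopologicalSpace A] [DiscreteTopology A] [TopologicalSpace B] [DiscreteTopology B]
    {x : ℤ → A} {y : ℤ → B} {i i' : ℤ} {n n' N : ℕ} (hx : ¬IsPeriodicSeq x)
    (hy : ¬IsPeriodicSeq y) (hp : IsLeastPeriod (removeBlock x i n) N)
    (hq : IsLeastPeriod (removeBlock y i' n') N) (hn : n ≡ n' [MOD N]) :
    Conjugate (subshiftGen x) (subshiftGen y) := by
  let z : ℤ → A × B := fun k => (x k, y k)
  let r : ℤ → A × B := fun k => (removeBlock x i n k, removeBlock y i' n' k)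
  have hr : IsPeriodicWith r N :=
    ⟨hp.1.1, fun k => Prod.ext (hp.1.periodic k) (hq.1.periodic k)⟩
  have hq' : Periodic (removeBlock y i' n') ((n' : ℤ) - n) := hq.1.periodic.of_dvd hn.dvd
  have hZ : subshiftGen z ⊆ seqOrbit z ∪ seqOrbit r := by
    refine subshiftGen_subset_seqOrbit_union (a := min i i') (b := max (i + n) (i' + n') + 1)
      (c := -n) hr (fun k hk => ?_) (fun k hk => ?_)
    · rw [Prod.ext_iff]
      exact ⟨(removeBlock_of_le (hk.trans (min_le_left _ _))).symm,
        (removeBlock_of_le (hk.trans (min_le_right _ _))).symm⟩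
    · have hk₁ : i + n < k := by omega
      have hk₂ : i' + n' < k := by omega
      rw [Prod.ext_iff, ← sub_eq_add_neg]
      refine ⟨(removeBlock_sub_of_lt hk₁).symm, ?_⟩
      show y k = removeBlock y i' n' (k - n)
      rw [← removeBlock_sub_of_lt (x := y) hk₂, ← hq' (k - n'), sub_add_sub_cancel]
  exact conjugate_of_injOn continuous_fst continuous_snd
    ((injOn_comp_seqOrbit_union (z := z) Prod.fst hx hr hp).mono hZ)
    ((injOn_comp_seqOrbit_union (z := z) Prod.snd hy hr hq).mono hZ)

/-- If `x` and `y` are eventually periodic sequences with the same least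
period `N` and `a(x) ≡ a(y) (mod N)`, then the subshifts they generate are conjugate. -/
theorem stmt_3 {A B : Type*} [Fintype A] [Fintype B]
    [TopologicalSpace A] [DiscreteTopology A] [TopologicalSpace B] [DiscreteTopology B]
    (x : ℤ → A) (y : ℤ → B) (hx : EventuallyPeriodic x) (hy : EventuallyPeriodic y)
    (N : ℕ) (hN : evLeastPeriod x = N) (hM : evLeastPeriod y = N)
    (h : anomalySize x ≡ anomalySize y [MOD N]) :
    Conjugate (subshiftGen x) (subshiftGen y) := by
  obtain ⟨i, n, hp, hn⟩ := exists_isLeastPeriod_removeBlock hx hN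
  obtain ⟨i', n', hq, hn'⟩ := exists_isLeastPeriod_removeBlock hy hM
  exact conjugate_subshiftGen_of_isLeastPeriod hx.1 hy.1 hp hq (hn.trans (h.trans hn'.symm))
end

section
/- Let p and q be relatively prime positive integers and let (a,b) be the restricted Bézout coefficients of (q,p). Then for every integer r with −p ≤ r ≤ −1, the map k ↦ k + q + a is a bijection from the set {k ∈ ℤ : r < k·(p/q) ≤ r+1} onto the set {k ∈ ℤ : r+p+b ≤ k·(p/q) < r+p+b+1}. -/
open Classical

/-!
Clearing the denominator, `k` lies in the first set iff `r q < k p ≤ (r + 1) q`. Since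
`b q - a p = 1`, we have `(k + q + a) p = k p + (p + b) q - 1`, so the shift by `q + a` moves
`k p` by one less than a multiple `(p + b) q` of `q`; by integrality this turns the strict
lower bound into a non-strict one and the non-strict upper bound into a strict one.
-/

section CastMulDiv

variable {K : Type*} [Field K] [LinearOrder K] [IsStrictOrderedRing K] {p q : ℤ}

theorem intCast_lt_mul_div_iff (hq : 0 < q) (x k : ℤ) :
    (x : K) < k * (p / q) ↔ x * q < k * p := by
  rw [mul_div_assoc', lt_div_iff₀ (by exact_mod_cast hq)]
  norm_cast

theorem intCast_le_mul_div_iff (hq : 0 < q) (x k : ℤ) :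
    (x : K) ≤ k * (p / q) ↔ x * q ≤ k * p := by
  rw [mul_div_assoc', le_div_iff₀ (by exact_mod_cast hq)]
  norm_cast

theorem mul_div_lt_intCast_iff (hq : 0 < q) (x k : ℤ) :
    k * (p / q : K) < x ↔ k * p < x * q := by
  rw [mul_div_assoc', div_lt_iff₀ (by exact_mod_cast hq)]
  norm_cast

theorem mul_div_le_intCast_iff (hq : 0 < q) (x k : ℤ) :
    k * (p / q : K) ≤ x ↔ k * p ≤ x * q := by
  rw [mul_div_assoc', div_le_iff₀ (by exact_mod_cast hq)]
  norm_cast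

end CastMulDiv

theorem lt_mul_and_mul_le_iff_add_of_bezout {p q a b : ℤ} (hab : b * q - a * p = 1) (r k : ℤ) :
    (r * q < k * p ∧ k * p ≤ (r + 1) * q) ↔
      ((r + p + b) * q ≤ (k + q + a) * p ∧ (k + q + a) * p < (r + p + b + 1) * q) := by
  have hshift : (k + q + a) * p = k * p + (p + b) * q - 1 := by linear_combination -hab
  rw [hshift]
  constructor <;> rintro ⟨h1, h2⟩ <;> constructor <;> linarith

theorem stmt_11_general (p q : ℤ) (hq : 0 < q) (a b : ℤ) (hab : b * q - a * p = 1) (r : ℤ) :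
    Set.BijOn (fun k : ℤ => k + q + a)
      {k : ℤ | (r : ℚ) < (k : ℚ) * ((p : ℚ) / (q : ℚ)) ∧
        (k : ℚ) * ((p : ℚ) / (q : ℚ)) ≤ (r : ℚ) + 1}
      {k : ℤ | (r : ℚ) + (p : ℚ) + (b : ℚ) ≤ (k : ℚ) * ((p : ℚ) / (q : ℚ)) ∧
        (k : ℚ) * ((p : ℚ) / (q : ℚ)) < (r : ℚ) + (p : ℚ) + (b : ℚ) + 1} := by
  have hshift : Function.Bijective (fun k : ℤ => k + q + a) :=
    ((Equiv.addRight q).trans (Equiv.addRight a)).bijective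
  convert hshift.bijOn_preimage using 1
  ext k
  have hk := lt_mul_and_mul_le_iff_add_of_bezout hab r k
  rw [← intCast_lt_mul_div_iff (K := ℚ) hq, ← mul_div_le_intCast_iff (K := ℚ) hq,
    ← intCast_le_mul_div_iff (K := ℚ) hq, ← mul_div_lt_intCast_iff (K := ℚ) hq] at hk
  exact_mod_cast hk

/-- With `(a,b)` the restricted Bézout coefficients of `(q,p)` and
`-p ≤ r ≤ -1`, the map `k ↦ k + q + a` is a bijection from
`{k : r < k·(p/q) ≤ r+1}` onto `{k : r+p+b ≤ k·(p/q) < r+p+b+1}`. -/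
theorem stmt_11 (p q : ℤ) (hp : 0 < p) (hq : 0 < q) (hpq : IsCoprime p q)
    (a b : ℤ) (ha : 0 ≤ a) (ha' : a < q) (hb : 0 < b) (hb' : b ≤ p)
    (hab : b * q - a * p = 1) (r : ℤ) (hr : -p ≤ r) (hr' : r ≤ -1) :
    Set.BijOn (fun k : ℤ => k + q + a)
      {k : ℤ | (r : ℚ) < (k : ℚ) * ((p : ℚ) / (q : ℚ)) ∧
        (k : ℚ) * ((p : ℚ) / (q : ℚ)) ≤ (r : ℚ) + 1}
      {k : ℤ | (r : ℚ) + (p : ℚ) + (b : ℚ) ≤ (k : ℚ) * ((p : ℚ) / (q : ℚ)) ∧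
        (k : ℚ) * ((p : ℚ) / (q : ℚ)) < (r : ℚ) + (p : ℚ) + (b : ℚ) + 1} :=
  stmt_11_general p q hq a b hab r
end
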